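/- arXiv:2506.21306 — 2 statements merged into one kernel-verified Lean document; each statement's English description precedes it below -/
import Mathlib

section
/- Define the sequence of polynomials f_0(x) = 1 and f_{k+1}(x) = (1/2) f_k(x) (3 − x² f_k(x)²). Then for every real x with 0 < |x| < √3, the sequence f_k(x) converges to 1/|x| as k → ∞; equivalently, x² f_k(x) → |x| as k → ∞. -/
/-- **Newton–Schulz iteration for `1/|x|`.**
Define `f 0 x = 1` and `f (k+1) x = (1/2) * f k x * (3 − x² (f k x)²)`.
Then for every real `x` with `0 < |x| < √3`, the sequence `f k x` converges to
`1/|x|`; equivalently, `x² * f k x → |x|` as `k → ∞`. -/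
theorem newton_schulz_converges
    (f : ℕ → ℝ → ℝ) (h0 : ∀ x, f 0 x = 1)
    (hrec : ∀ k x, f (k + 1) x = (1/2) * f k x * (3 - x ^ 2 * (f k x) ^ 2)) :
    ∀ x : ℝ, 0 < |x| → |x| < Real.sqrt 3 →
      Filter.Tendsto (fun k => f k x) Filter.atTop (nhds (1 / |x|)) ∧
        Filter.Tendsto (fun k => x ^ 2 * f k x) Filter.atTop (nhds |x|) := by
  intro x hx hx3
  set a := |x| with ha
  have hx2 : x ^ 2 = a ^ 2 := (sq_abs x).symm
  have ha2 : a ^ 2 < 3 := by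
    have h3 : Real.sqrt 3 ^ 2 = 3 := Real.sq_sqrt (by norm_num)
    nlinarith [Real.sqrt_nonneg 3]
  set y : ℕ → ℝ := fun k => a * f k x with hy
  have hy0 : y 0 = a := by simp [hy, h0]
  have hyrec : ∀ k, y (k + 1) = y k * (3 - (y k) ^ 2) / 2 := by
    intro k
    have h : x ^ 2 * (f k x) ^ 2 = (y k) ^ 2 := by rw [hx2, hy]; ring
    simp only [hy]
    rw [hrec, h]
    simp only [hy]
    ring
  have hb : ∀ k, 0 < y k ∧ y k ^ 2 < 3 := by
    intro k
    induction k with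
    | zero => exact ⟨hy0 ▸ hx, hy0 ▸ ha2⟩
    | succ n ih =>
      obtain ⟨hp, hs⟩ := ih
      have h3s : (0:ℝ) < 3 - y n ^ 2 := by linarith
      constructor
      · rw [hyrec]; positivity
      · rw [hyrec]
        have hle : y n * (3 - y n ^ 2) / 2 ≤ 1 := by
          nlinarith [sq_nonneg (y n - 1)]
        have hgt : 0 < y n * (3 - y n ^ 2) / 2 := by positivity
        nlinarith
  have h1 : ∀ k, y (k + 1) ≤ 1 := by
    intro k
    obtain ⟨hp, hs⟩ := hb k
    rw [hyrec]
    nlinarith [sq_nonneg (y k - 1)]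
  have hmono : ∀ k, y (k + 1) ≤ y (k + 2) := by
    intro k
    obtain ⟨hp, _⟩ := hb (k + 1)
    have := h1 k
    rw [hyrec (k + 1)]
    nlinarith
  set z : ℕ → ℝ := fun k => y (k + 1) with hz
  have hzmono : Monotone z := monotone_nat_of_le_succ fun n => hmono n
  have hzbdd : BddAbove (Set.range z) := ⟨1, by rintro t ⟨k, rfl⟩; exact h1 k⟩
  set L : ℝ := ⨆ k, z k with hL
  have hzL : Filter.Tendsto z Filter.atTop (nhds L) :=
    tendsto_atTop_ciSup hzmono hzbdd
  have hLpos : 0 < L := lt_of_lt_of_le (hb 1).1 (le_ciSup hzbdd 0)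
  have hL1 : L ≤ 1 := ciSup_le h1
  -- fixed point
  have hcont : Continuous fun t : ℝ => t * (3 - t ^ 2) / 2 := by continuity
  have h2 : Filter.Tendsto (fun k => z (k + 1)) Filter.atTop (nhds L) :=
    hzL.comp (Filter.tendsto_add_atTop_nat 1)
  have h3 : Filter.Tendsto (fun k => z k * (3 - z k ^ 2) / 2) Filter.atTop
      (nhds (L * (3 - L ^ 2) / 2)) := (hcont.tendsto L).comp hzL
  have heq : (fun k => z (k + 1)) = fun k => z k * (3 - z k ^ 2) / 2 := by
    funext k
    simp only [hz]
    exact hyrec (k + 1)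
  have h2' : Filter.Tendsto (fun k => z k * (3 - z k ^ 2) / 2) Filter.atTop (nhds L) := by
    rw [← heq]; exact h2
  have hfix : L * (3 - L ^ 2) / 2 = L := tendsto_nhds_unique h3 h2'
  have hLone : L = 1 := by nlinarith [mul_pos hLpos hLpos]
  have hyL : Filter.Tendsto y Filter.atTop (nhds 1) := by
    have := hLone ▸ hzL
    exact (Filter.tendsto_add_atTop_iff_nat 1).mp this
  have hane : a ≠ 0 := ne_of_gt hx
  constructor
  · have : Filter.Tendsto (fun k => y k / a) Filter.atTop (nhds (1 / a)) :=
      hyL.div_const a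
    convert this using 2 with k
    rw [hy]
    field_simp
  · have : Filter.Tendsto (fun k => a * y k) Filter.atTop (nhds (a * 1)) :=
      hyL.const_mul a
    rw [mul_one] at this
    convert this using 2 with k
    rw [hy, hx2]
    ring
end

section
/- Let Q : ℝ → ℝ be even with Q′ existing, continuous, and positive on (0, ∞), such that x ↦ x Q′(x) is strictly increasing on (0, ∞) with limit 0 at 0⁺ and limit ∞ at ∞. Then for every real n > 0 the equation (2/π) ∫₀¹ a t Q′(a t) / √(1 − t²) dt = n has a unique solution a = a_n > 0; indeed the map a ↦ (2/π) ∫₀¹ a t Q′(a t)/√(1−t²) dt is strictly increasing on (0,∞) with limits 0 at 0⁺ and ∞ at ∞. -/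
open MeasureTheory intervalIntegral Set


set_option maxHeartbeats 1000000 in
open Filter in
/-- **Existence and uniqueness of the Mhaskar–Rakhmanov–Saff number.**
Let `Q : ℝ → ℝ` be even, with derivative `Q′` existing, continuous, and
positive on `(0,∞)`, such that `x ↦ x Q′(x)` is strictly increasing on `(0,∞)`
with limit `0` at `0⁺` and limit `∞` at `∞`. Then the map
`a ↦ (2/π) ∫₀¹ a t Q′(a t)/√(1 − t²) dt` is strictly increasing on `(0,∞)`
with limits `0` at `0⁺` and `∞` at `∞`, and for every real `n > 0` the
equation `(2/π) ∫₀¹ a t Q′(a t)/√(1 − t²) dt = n` has a unique solution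
`a > 0`. -/
theorem mrs_unique_solution (Q Q' : ℝ → ℝ)
    (heven : ∀ x, Q (-x) = Q x)
    (hderiv : ∀ x ∈ Set.Ioi (0:ℝ), HasDerivAt Q (Q' x) x)
    (hcont : ContinuousOn Q' (Set.Ioi 0))
    (hpos : ∀ x ∈ Set.Ioi (0:ℝ), 0 < Q' x)
    (hmono : StrictMonoOn (fun x => x * Q' x) (Set.Ioi 0))
    (h0 : Tendsto (fun x => x * Q' x) (nhdsWithin 0 (Set.Ioi 0)) (nhds 0))
    (hinf : Tendsto (fun x => x * Q' x) atTop atTop) :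
    StrictMonoOn
        (fun a => (2/Real.pi) * ∫ t in (0:ℝ)..1,
          a * t * Q' (a * t) / Real.sqrt (1 - t ^ 2)) (Set.Ioi 0) ∧
      Tendsto
        (fun a => (2/Real.pi) * ∫ t in (0:ℝ)..1,
          a * t * Q' (a * t) / Real.sqrt (1 - t ^ 2))
        (nhdsWithin 0 (Set.Ioi 0)) (nhds 0) ∧
      Tendsto
        (fun a => (2/Real.pi) * ∫ t in (0:ℝ)..1,
          a * t * Q' (a * t) / Real.sqrt (1 - t ^ 2)) atTop atTop ∧
      ∀ n : ℝ, 0 < n → ∃! a : ℝ, 0 < a ∧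
        (2/Real.pi) * ∫ t in (0:ℝ)..1,
          a * t * Q' (a * t) / Real.sqrt (1 - t ^ 2) = n := by
  have pi_pos := Real.pi_pos
  have h2pi : (0:ℝ) < 2 / Real.pi := by positivity
  -- the dominating weight
  set b0 : ℝ → ℝ := fun t => (1 - t) ^ (-(1/2) : ℝ) with hb0def
  have hb0int : IntervalIntegrable b0 volume 0 1 := by
    have h1 : IntervalIntegrable (fun x : ℝ => x ^ (-(1/2):ℝ)) volume 0 1 :=
      intervalIntegrable_rpow' (by norm_num)
    have h2 := h1.comp_sub_left 1
    norm_num at h2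
    exact h2.symm
  have hb0nonneg : ∀ t ∈ Set.Icc (0:ℝ) 1, 0 ≤ b0 t := by
    intro t ht
    exact Real.rpow_nonneg (by linarith [ht.2]) _
  -- pointwise bound
  have hbound : ∀ a : ℝ, 0 < a → ∀ c : ℝ, a ≤ c → ∀ t ∈ Set.Ioc (0:ℝ) 1,
      |a * t * Q' (a * t) / Real.sqrt (1 - t ^ 2)| ≤ c * Q' c * b0 t := by
    intro a ha c hac t ht
    have hat : 0 < a * t := mul_pos ha ht.1
    have hc : 0 < c := lt_of_lt_of_le ha hac
    have hnum : 0 < a * t * Q' (a * t) := mul_pos hat (hpos _ hat)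
    have hnumc : a * t * Q' (a * t) ≤ c * Q' c := by
      have hatc : a * t ≤ c := le_trans (by nlinarith [ht.2]) hac
      exact hmono.monotoneOn hat hc hatc
    rcases eq_or_lt_of_le ht.2 with h1 | h1
    · subst h1
      have hsq : Real.sqrt (1 - 1 ^ 2) = 0 := by norm_num
      have hb01 : b0 1 = 0 := by
        simp only [hb0def, sub_self]
        exact Real.zero_rpow (by norm_num)
      rw [hsq, div_zero, abs_zero, hb01, mul_zero]
    · have h1t : 0 < 1 - t := by linarith
      have hs : Real.sqrt (1 - t) ≤ Real.sqrt (1 - t ^ 2) :=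
        Real.sqrt_le_sqrt (by nlinarith [ht.1.le])
      have hspos : 0 < Real.sqrt (1 - t) := Real.sqrt_pos.mpr h1t
      rw [abs_of_nonneg (div_nonneg hnum.le (Real.sqrt_nonneg _))]
      have hrw : c * Q' c * b0 t = c * Q' c / Real.sqrt (1 - t) := by
        simp only [hb0def]
        rw [Real.rpow_neg h1t.le, ← Real.sqrt_eq_rpow, div_eq_mul_inv]
      rw [hrw]
      exact div_le_div₀ (hnum.le.trans hnumc) hnumc hspos hs
  -- nonnegativity of the integrand
  have hfnonneg : ∀ a : ℝ, 0 < a → ∀ t ∈ Set.Icc (0:ℝ) 1,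
      0 ≤ a * t * Q' (a * t) / Real.sqrt (1 - t ^ 2) := by
    intro a ha t ht
    rcases eq_or_lt_of_le ht.1 with h | h
    · simp [← h]
    · exact div_nonneg (mul_pos (mul_pos ha h) (hpos _ (mul_pos ha h))).le
        (Real.sqrt_nonneg _)
  -- measurability
  have hmeas : ∀ a : ℝ, 0 < a → AEStronglyMeasurable
      (fun t => a * t * Q' (a * t) / Real.sqrt (1 - t ^ 2))
      (volume.restrict (Set.uIoc (0:ℝ) 1)) := by
    intro a ha
    have hco : ContinuousOn (fun t => a * t * Q' (a * t) / Real.sqrt (1 - t ^ 2))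
        (Set.Ioo (0:ℝ) 1) := by
      apply ContinuousOn.div
      · exact (continuousOn_const.mul continuousOn_id).mul
          (hcont.comp (continuousOn_const.mul continuousOn_id)
            (fun t ht => mul_pos ha ht.1))
      · exact (Real.continuous_sqrt.comp (by continuity)).continuousOn
      · intro t ht
        exact (Real.sqrt_pos.mpr (by nlinarith [ht.1, ht.2])).ne'
    rw [Set.uIoc_of_le (zero_le_one (α := ℝ)),
      ← Measure.restrict_congr_set Ioo_ae_eq_Ioc]
    exact hco.aestronglyMeasurable measurableSet_Ioo
  -- integrability
  have hintf : ∀ a : ℝ, 0 < a → IntervalIntegrable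
      (fun t => a * t * Q' (a * t) / Real.sqrt (1 - t ^ 2)) volume 0 1 := by
    intro a ha
    apply (hb0int.const_mul (a * Q' a)).mono_fun (hmeas a ha)
    filter_upwards [ae_restrict_mem measurableSet_uIoc] with t ht
    rw [Set.uIoc_of_le (zero_le_one (α := ℝ))] at ht
    have := hbound a ha a le_rfl t ht
    rw [Real.norm_eq_abs, Real.norm_eq_abs]
    refine le_trans this (le_abs_self _)
  -- strict monotonicity
  have hsm : StrictMonoOn
      (fun a => (2/Real.pi) * ∫ t in (0:ℝ)..1,
        a * t * Q' (a * t) / Real.sqrt (1 - t ^ 2)) (Set.Ioi 0) := by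
    intro a ha b hb hab
    simp only [Set.mem_Ioi] at ha hb
    have hdiff : 0 < ∫ t in (0:ℝ)..1,
        (b * t * Q' (b * t) / Real.sqrt (1 - t ^ 2)
          - a * t * Q' (a * t) / Real.sqrt (1 - t ^ 2)) := by
      apply intervalIntegral_pos_of_pos_on ((hintf b hb).sub (hintf a ha))
      · intro t ht
        have hat : 0 < a * t := mul_pos ha ht.1
        have hbt : 0 < b * t := mul_pos hb ht.1
        have hlt : a * t * Q' (a * t) < b * t * Q' (b * t) :=
          hmono hat hbt (by nlinarith)
        have hs : 0 < Real.sqrt (1 - t ^ 2) :=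
          Real.sqrt_pos.mpr (by nlinarith [ht.1, ht.2])
        have := (div_lt_div_iff_of_pos_right hs).mpr hlt
        linarith
      · exact zero_lt_one
    rw [intervalIntegral.integral_sub (hintf b hb) (hintf a ha)] at hdiff
    dsimp only
    nlinarith
  -- upper bound for the integral
  have hub : ∀ a : ℝ, 0 < a → (∫ t in (0:ℝ)..1,
      a * t * Q' (a * t) / Real.sqrt (1 - t ^ 2))
      ≤ (a * Q' a) * ∫ t in (0:ℝ)..1, b0 t := by
    intro a ha
    rw [← intervalIntegral.integral_const_mul]
    apply intervalIntegral.integral_mono_on zero_le_one (hintf a ha)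
      (hb0int.const_mul _)
    intro t ht
    rcases eq_or_lt_of_le ht.1 with h | h
    · have : a * t * Q' (a * t) / Real.sqrt (1 - t ^ 2) = 0 := by simp [← h]
      rw [this]
      exact mul_nonneg (mul_pos ha (hpos a ha)).le (hb0nonneg t ht)
    · exact le_trans (le_abs_self _) (hbound a ha a le_rfl t ⟨h, ht.2⟩)
  -- limit at 0⁺
  have hT0 : Tendsto
      (fun a => (2/Real.pi) * ∫ t in (0:ℝ)..1,
        a * t * Q' (a * t) / Real.sqrt (1 - t ^ 2))
      (nhdsWithin 0 (Set.Ioi 0)) (nhds 0) := by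
    have htail : Tendsto (fun a => (2/Real.pi) * ((a * Q' a) * ∫ t in (0:ℝ)..1, b0 t))
        (nhdsWithin 0 (Set.Ioi 0)) (nhds 0) := by
      have := ((h0.mul_const (∫ t in (0:ℝ)..1, b0 t)).const_mul (2/Real.pi))
      simpa using this
    apply tendsto_of_tendsto_of_tendsto_of_le_of_le' tendsto_const_nhds htail
    · filter_upwards [eventually_mem_nhdsWithin] with a ha
      exact mul_nonneg h2pi.le (intervalIntegral.integral_nonneg zero_le_one
        (hfnonneg a ha))
    · filter_upwards [eventually_mem_nhdsWithin] with a ha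
      exact mul_le_mul_of_nonneg_left (hub a ha) h2pi.le
  -- lower bound for the integral
  have hlb : ∀ a : ℝ, 0 < a → (1/4) * (a/2 * Q' (a/2)) ≤ ∫ t in (0:ℝ)..1,
      a * t * Q' (a * t) / Real.sqrt (1 - t ^ 2) := by
    intro a ha
    have i1 : IntervalIntegrable
        (fun t => a * t * Q' (a * t) / Real.sqrt (1 - t ^ 2)) volume 0 (3/4) :=
      (hintf a ha).mono_set (by rw [Set.uIcc_of_le, Set.uIcc_of_le] <;> first
        | exact Set.Icc_subset_Icc (le_refl _) (by norm_num) | norm_num)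
    have i2 : IntervalIntegrable
        (fun t => a * t * Q' (a * t) / Real.sqrt (1 - t ^ 2)) volume (3/4) 1 :=
      (hintf a ha).mono_set (by rw [Set.uIcc_of_le, Set.uIcc_of_le] <;> first
        | exact Set.Icc_subset_Icc (by norm_num) (le_refl _) | norm_num)
    have i3 : IntervalIntegrable
        (fun t => a * t * Q' (a * t) / Real.sqrt (1 - t ^ 2)) volume 0 (1/2) :=
      (hintf a ha).mono_set (by rw [Set.uIcc_of_le, Set.uIcc_of_le] <;> first
        | exact Set.Icc_subset_Icc (le_refl _) (by norm_num) | norm_num)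
    have i4 : IntervalIntegrable
        (fun t => a * t * Q' (a * t) / Real.sqrt (1 - t ^ 2)) volume (1/2) (3/4) :=
      (hintf a ha).mono_set (by rw [Set.uIcc_of_le, Set.uIcc_of_le] <;> first
        | exact Set.Icc_subset_Icc (by norm_num) (by norm_num) | norm_num)
    have hsplit1 := intervalIntegral.integral_add_adjacent_intervals i1 i2
    have hsplit2 := intervalIntegral.integral_add_adjacent_intervals i3 i4
    have e2 : 0 ≤ ∫ t in (3/4:ℝ)..1, a * t * Q' (a * t) / Real.sqrt (1 - t ^ 2) :=
      intervalIntegral.integral_nonneg (by norm_num)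
        (fun t ht => hfnonneg a ha t ⟨by linarith [ht.1], ht.2⟩)
    have e3 : 0 ≤ ∫ t in (0:ℝ)..(1/2:ℝ), a * t * Q' (a * t) / Real.sqrt (1 - t ^ 2) :=
      intervalIntegral.integral_nonneg (by norm_num)
        (fun t ht => hfnonneg a ha t ⟨ht.1, by linarith [ht.2]⟩)
    have e4 : (1/4) * (a/2 * Q' (a/2)) ≤
        ∫ t in (1/2:ℝ)..(3/4:ℝ), a * t * Q' (a * t) / Real.sqrt (1 - t ^ 2) := by
      have hc : ∀ t ∈ Set.Icc (1/2:ℝ) (3/4), a/2 * Q' (a/2) ≤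
          a * t * Q' (a * t) / Real.sqrt (1 - t ^ 2) := by
        intro t ht
        have ha2 : (0:ℝ) < a/2 := by linarith
        have hat : 0 < a * t := by nlinarith [ht.1]
        have h1 : a/2 * Q' (a/2) ≤ a * t * Q' (a * t) :=
          hmono.monotoneOn ha2 hat (by nlinarith [ht.1])
        have hs1 : Real.sqrt (1 - t ^ 2) ≤ 1 :=
          Real.sqrt_le_one.mpr (by nlinarith [ht.1])
        have hs0 : 0 < Real.sqrt (1 - t ^ 2) :=
          Real.sqrt_pos.mpr (by nlinarith [ht.1, ht.2])
        rw [le_div_iff₀ hs0]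
        nlinarith [mul_pos hat (hpos _ hat), mul_pos ha2 (hpos _ ha2)]
      have hmlem : (∫ _t in (1/2:ℝ)..(3/4:ℝ), (a/2 * Q' (a/2))) ≤
          ∫ t in (1/2:ℝ)..(3/4:ℝ), a * t * Q' (a * t) / Real.sqrt (1 - t ^ 2) :=
        intervalIntegral.integral_mono_on (by norm_num)
          (_root_.intervalIntegrable_const (c := a/2 * Q' (a/2))) i4 hc
      rw [_root_.intervalIntegral.integral_const] at hmlem
      have h34 : ((3:ℝ)/4 - 1/2) = 1/4 := by norm_num
      rw [h34] at hmlem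
      simpa [smul_eq_mul] using hmlem
    linarith [hsplit1, hsplit2, e2, e3, e4]
  -- limit at ∞
  have hTinf : Tendsto
      (fun a => (2/Real.pi) * ∫ t in (0:ℝ)..1,
        a * t * Q' (a * t) / Real.sqrt (1 - t ^ 2)) atTop atTop := by
    have hgrow : Tendsto (fun a : ℝ => (2/Real.pi) * ((1/4) * (a/2 * Q' (a/2))))
        atTop atTop := by
      have h1 : Tendsto (fun a : ℝ => a/2) atTop atTop :=
        tendsto_id.atTop_div_const two_pos
      have h2 : Tendsto (fun a : ℝ => a/2 * Q' (a/2)) atTop atTop := hinf.comp h1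
      exact Filter.Tendsto.const_mul_atTop h2pi (Filter.Tendsto.const_mul_atTop (by norm_num) h2)
    apply tendsto_atTop_mono' atTop _ hgrow
    filter_upwards [eventually_gt_atTop (0:ℝ)] with a ha
    exact mul_le_mul_of_nonneg_left (hlb a ha) h2pi.le
  -- continuity on (0, ∞)
  have hFc : ∀ x₀ ∈ Set.Ioi (0:ℝ), ContinuousAt
      (fun a => (2/Real.pi) * ∫ t in (0:ℝ)..1,
        a * t * Q' (a * t) / Real.sqrt (1 - t ^ 2)) x₀ := by
    intro x₀ hx₀
    simp only [Set.mem_Ioi] at hx₀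
    refine ContinuousAt.mul continuousAt_const ?_
    apply intervalIntegral.continuousAt_of_dominated_interval
      (bound := fun t => ((x₀ + 1) * Q' (x₀ + 1)) * b0 t)
    · filter_upwards [Ioo_mem_nhds hx₀ (lt_add_one x₀)] with a ha
      exact hmeas a ha.1
    · filter_upwards [Ioo_mem_nhds hx₀ (lt_add_one x₀)] with a ha
      apply Eventually.of_forall
      intro t ht
      rw [Set.uIoc_of_le (zero_le_one (α := ℝ))] at ht
      rw [Real.norm_eq_abs]
      exact hbound a ha.1 (x₀ + 1) ha.2.le t ht
    · exact hb0int.const_mul _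
    · apply Eventually.of_forall
      intro t ht
      rw [Set.uIoc_of_le (zero_le_one (α := ℝ))] at ht
      rcases eq_or_lt_of_le ht.2 with h | h
      · subst h
        have : (fun a : ℝ => a * 1 * Q' (a * 1) / Real.sqrt (1 - 1 ^ 2))
            = fun _ => (0:ℝ) := by
          funext a
          norm_num
        rw [this]
        exact continuousAt_const
      · have hQc : ContinuousAt (fun a : ℝ => Q' (a * t)) x₀ := by
          have : ContinuousAt Q' (x₀ * t) :=
            hcont.continuousAt (Ioi_mem_nhds (mul_pos hx₀ ht.1))
          have hmulc : ContinuousAt (fun a : ℝ => a * t) x₀ :=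
            continuousAt_id.mul continuousAt_const
          exact Filter.Tendsto.comp this hmulc
        exact ((continuousAt_id.mul continuousAt_const).mul hQc).div_const _
  refine ⟨hsm, hT0, hTinf, ?_⟩
  intro n hn
  obtain ⟨a₀, ha₀n, ha₀⟩ := ((hT0.eventually_lt_const hn).and
    eventually_mem_nhdsWithin).exists
  obtain ⟨a₁, ha₁n, ha₁⟩ := ((hTinf.eventually_gt_atTop n).and
    (eventually_ge_atTop a₀)).exists
  have ha₀pos : (0:ℝ) < a₀ := ha₀
  have hcont' : ContinuousOn
      (fun a => (2/Real.pi) * ∫ t in (0:ℝ)..1,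
        a * t * Q' (a * t) / Real.sqrt (1 - t ^ 2)) (Set.Icc a₀ a₁) := by
    intro x hx
    exact (hFc x (lt_of_lt_of_le ha₀pos hx.1)).continuousWithinAt
  have hmem : n ∈ Set.Icc
      ((2/Real.pi) * ∫ t in (0:ℝ)..1, a₀ * t * Q' (a₀ * t) / Real.sqrt (1 - t ^ 2))
      ((2/Real.pi) * ∫ t in (0:ℝ)..1, a₁ * t * Q' (a₁ * t) / Real.sqrt (1 - t ^ 2)) :=
    ⟨ha₀n.le, ha₁n.le⟩
  obtain ⟨a, haI, hFa⟩ := intermediate_value_Icc ha₁ hcont' hmem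
  refine ⟨a, ⟨lt_of_lt_of_le ha₀pos haI.1, hFa⟩, ?_⟩
  intro y hy
  have hamem : a ∈ Set.Ioi (0:ℝ) := lt_of_lt_of_le ha₀pos haI.1
  exact hsm.injOn hy.1 hamem (hy.2.trans hFa.symm)
end
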